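/- Let f : {0,1}^n → {0,1} be a Boolean function. Then Pat(f) ≤ 2·6^{spar(f)/3}, i.e., the Möbius pattern complexity of f is at most 2^{((log₂6)/3)·spar(f) + 1}. -/

import Mathlib

/-- `AND_S(x) = ∏_{i ∈ S} x_i` as a real number. -/
def andR {n : ℕ} (S : Finset (Fin n)) (x : Fin n → Bool) : ℝ :=
  ∏ i ∈ S, (if x i then (1 : ℝ) else 0)

/-- `AND_S(x)` as a Boolean. -/
def andB {n : ℕ} (S : Finset (Fin n)) (x : Fin n → Bool) : Bool :=
  decide (∀ i ∈ S, x i = true)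

/-!
For each input `x`, the members of the Möbius support that fire on `x` form a subset of `S_f`;
these subsets are closed under intersection (take the coordinatewise AND of the inputs) and each
has `c`-weight `f x ∈ {0, 1}`. We bound every intersection-closed family `𝒜` of subsets of `I`
whose weights take only two consecutive values `γ, γ + 1` by `2 β^|I|`, `β = 6^(1/3)`, by
induction on `|I|`. For `∅ ≠ U ⊆ I`, the members with a fixed trace `A ∩ U = B` become, after
removing `U`, a family of the same kind on `I \ U` (with `γ` shifted by the weight of `B`), so
there are at most `2 β^|I| β^(-|U|)` of them; it suffices to cover `𝒜` by fibres whose weights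
`β^(-|U|)` add up to at most `1`. If `∅ ∉ 𝒜`, the least member of `𝒜` gives a single fibre.
Otherwise, negating `c` if necessary, the weights are `0` and `1`. A minimal nonempty member of
size `≥ 2` gives two fibres; otherwise the minimal members are singletons `{i}` of weight `1`: either one of them lies in every
nonempty member, or two of them never meet (three traces on `{i, j}`), or the least member `U`
containing two of them has size `3` (at most six traces: the tight case `6 β^(-3) = 1`) or
at least `4` (fibres over `{i}`, `{i, j}` and `U`, with `β⁻¹ + β⁻² + β⁻⁴ ≤ 1`).
-/

open Finset

noncomputable def cbrtSix : ℝ := 6 ^ (1 / 3 : ℝ)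

lemma cbrtSix_pow_eq_rpow (m : ℕ) : cbrtSix ^ m = (6 : ℝ) ^ ((m : ℝ) / 3) := by
  rw [cbrtSix, ← Real.rpow_natCast, ← Real.rpow_mul (by norm_num)]
  ring_nf

lemma cbrtSix_pos : 0 < cbrtSix := by
  unfold cbrtSix; positivity

lemma two_mul_cbrtSix_pow_nonneg {m : ℕ} : 0 ≤ 2 * cbrtSix ^ m := by
  have := cbrtSix_pos; positivity

lemma cbrtSix_inv_pow_three : cbrtSix⁻¹ ^ 3 = 6⁻¹ := by
  rw [inv_pow, cbrtSix_pow_eq_rpow]; norm_num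

lemma cbrtSix_inv_pos : 0 < cbrtSix⁻¹ := inv_pos.mpr cbrtSix_pos

lemma cbrtSix_inv_le : cbrtSix⁻¹ ≤ 0.553 := by
  rw [← pow_le_pow_iff_left₀ cbrtSix_inv_pos.le (by norm_num) three_ne_zero,
    cbrtSix_inv_pow_three]
  norm_num

lemma cbrtSix_inv_le_one : cbrtSix⁻¹ ≤ 1 := cbrtSix_inv_le.trans (by norm_num)

lemma three_mul_cbrtSix_inv_sq_le_one : 3 * cbrtSix⁻¹ ^ 2 ≤ 1 := by
  nlinarith [cbrtSix_inv_le, cbrtSix_inv_pos]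

lemma cbrtSix_inv_add_sq_add_pow_four_le_one :
    cbrtSix⁻¹ + cbrtSix⁻¹ ^ 2 + cbrtSix⁻¹ ^ 4 ≤ 1 := by
  have h := cbrtSix_inv_le
  have h0 := cbrtSix_inv_pos
  have h2 : cbrtSix⁻¹ ^ 2 ≤ 0.553 ^ 2 := by gcongr
  have h4 : cbrtSix⁻¹ ^ 4 ≤ 0.553 ^ 4 := by gcongr
  norm_num at h2 h4 ⊢
  linarith

lemma three_halves_le_cbrtSix : 3 / 2 ≤ cbrtSix := by
  rw [← pow_le_pow_iff_left₀ (by norm_num) cbrtSix_pos.le three_ne_zero, cbrtSix_pow_eq_rpow]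
  norm_num

lemma one_add_two_mul_cbrtSix_pow_mul_inv_le {m : ℕ} (hm : m ≠ 0) :
    1 + 2 * cbrtSix ^ m * cbrtSix⁻¹ ≤ 2 * cbrtSix ^ m := by
  have hβ := three_halves_le_cbrtSix
  have hpow : 3 / 2 ≤ cbrtSix ^ m := hβ.trans (le_self_pow₀ (by linarith) hm)
  have hinv := cbrtSix_inv_le
  nlinarith [mul_nonneg (sub_nonneg.2 hpow) (sub_nonneg.2 hinv)]

section PatternFamily

variable {ι : Type*} [DecidableEq ι]

structure IsPatternFamily (I : Finset ι) (𝒜 : Finset (Finset ι)) (c : ι → ℝ) (γ : ℝ) :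
    Prop where
  subset_of_mem : ∀ A ∈ 𝒜, A ⊆ I
  weight_ne_zero : ∀ i ∈ I, c i ≠ 0
  inter_mem : ∀ A ∈ 𝒜, ∀ B ∈ 𝒜, A ∩ B ∈ 𝒜
  sum_mem : ∀ A ∈ 𝒜, ∑ i ∈ A, c i = γ ∨ ∑ i ∈ A, c i = γ + 1

def PatternBound (I : Finset ι) : Prop :=
  ∀ (𝒜 : Finset (Finset ι)) (c : ι → ℝ) (γ : ℝ),
    IsPatternFamily I 𝒜 c γ → (#𝒜 : ℝ) ≤ 2 * cbrtSix ^ #I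

lemma injOn_sdiff_of_inter_eq (U B : Finset ι) : Set.InjOn (· \ U) {A | A ∩ U = B} := by
  intro A₁ h₁ A₂ h₂ he
  rw [← sdiff_union_inter A₁ U, ← sdiff_union_inter A₂ U]
  exact congrArg₂ (· ∪ ·) he (h₁.trans h₂.symm)

lemma exists_minimal_nonempty_subset {𝒜 : Finset (Finset ι)} {A : Finset ι} (hA : A ∈ 𝒜)
    (hne : A.Nonempty) :
    ∃ w ∈ 𝒜, w.Nonempty ∧ w ⊆ A ∧ ∀ C ∈ 𝒜, C ⊆ w → C = ∅ ∨ C = w := by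
  obtain ⟨w, hw, hmin⟩ := exists_min_image (𝒜.filter fun B => B.Nonempty ∧ B ⊆ A) card
    ⟨A, mem_filter.2 ⟨hA, hne, subset_rfl⟩⟩
  obtain ⟨hw𝒜, hwne, hwA⟩ := mem_filter.1 hw
  refine ⟨w, hw𝒜, hwne, hwA, fun C hC hCw => ?_⟩
  rcases C.eq_empty_or_nonempty with hC0 | hCne
  · exact .inl hC0
  · exact .inr (eq_of_subset_of_card_le hCw (hmin C (mem_filter.2 ⟨hC, hCne, hCw.trans hwA⟩)))

namespace IsPatternFamily

variable {I : Finset ι} {𝒜 : Finset (Finset ι)} {c : ι → ℝ} {γ : ℝ}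

lemma neg (h : IsPatternFamily I 𝒜 c γ) : IsPatternFamily I 𝒜 (-c) (-γ - 1) where
  subset_of_mem := h.subset_of_mem
  weight_ne_zero i hi := neg_ne_zero.2 (h.weight_ne_zero i hi)
  inter_mem := h.inter_mem
  sum_mem A hA := by
    simp only [Pi.neg_apply, sum_neg_distrib]
    rcases h.sum_mem A hA with hs | hs <;> rw [hs]
    exacts [.inr (by ring), .inl (by ring)]

lemma weight_eq_one_of_singleton_mem (h : IsPatternFamily I 𝒜 c 0) {i : ι} (hi : {i} ∈ 𝒜) :
    c i = 1 := by
  have hne := h.weight_ne_zero i (h.subset_of_mem _ hi (mem_singleton_self i))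
  simpa [hne] using h.sum_mem _ hi

lemma fiber (h : IsPatternFamily I 𝒜 c γ) (U B : Finset ι) :
    IsPatternFamily (I \ U) ((𝒜.filter (· ∩ U = B)).image (· \ U)) c (γ - ∑ i ∈ B, c i) where
  subset_of_mem := by
    simp only [mem_image, mem_filter]
    rintro _ ⟨A, ⟨hA, -⟩, rfl⟩
    exact sdiff_subset_sdiff (h.subset_of_mem A hA) subset_rfl
  weight_ne_zero i hi := h.weight_ne_zero i (mem_sdiff.1 hi).1
  inter_mem := by
    simp only [mem_image, mem_filter]
    rintro _ ⟨A₁, ⟨hA₁, hB₁⟩, rfl⟩ _ ⟨A₂, ⟨hA₂, hB₂⟩, rfl⟩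
    refine ⟨A₁ ∩ A₂, ⟨h.inter_mem A₁ hA₁ A₂ hA₂, ?_⟩, ?_⟩
    · rw [inter_inter_distrib_right, hB₁, hB₂, inter_self]
    · ext; simp only [mem_sdiff, mem_inter]; tauto
  sum_mem := by
    simp only [mem_image, mem_filter]
    rintro _ ⟨A, ⟨hA, hB⟩, rfl⟩
    have hsplit : ∑ i ∈ A \ U, c i + ∑ i ∈ B, c i = ∑ i ∈ A, c i := by
      rw [← sdiff_inter_self_left, hB]
      exact sum_sdiff (hB ▸ inter_subset_left)
    rcases h.sum_mem A hA with hs | hs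
    exacts [.inl (by linarith), .inr (by linarith)]

lemma card_le_of_inter_eq (ih : ∀ J ⊂ I, PatternBound J) (h : IsPatternFamily I 𝒜 c γ)
    {U B : Finset ι} {𝒞 : Finset (Finset ι)} {k : ℕ} (hUI : U ⊆ I) (hk : 0 < k)
    (hkU : k ≤ #U) (h𝒞 : 𝒞 ⊆ 𝒜) (hB : ∀ A ∈ 𝒞, A ∩ U = B) :
    (#𝒞 : ℝ) ≤ 2 * cbrtSix ^ #I * cbrtSix⁻¹ ^ k := by
  set F := 𝒜.filter (· ∩ U = B)
  have hUne : U.Nonempty := card_pos.1 (hk.trans_le hkU)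
  have hinj : #(F.image (· \ U)) = #F :=
    card_image_of_injOn ((injOn_sdiff_of_inter_eq U B).mono fun A hA => (mem_filter.1 hA).2)
  calc (#𝒞 : ℝ) ≤ #F := by
        exact_mod_cast card_le_card fun A hA => mem_filter.2 ⟨h𝒞 hA, hB A hA⟩
    _ = #(F.image (· \ U)) := by rw [hinj]
    _ ≤ 2 * cbrtSix ^ #(I \ U) := ih _ (sdiff_ssubset hUI hUne) _ _ _ (h.fiber U B)
    _ = 2 * cbrtSix ^ #I * cbrtSix⁻¹ ^ #U := by
        rw [card_sdiff_of_subset hUI, pow_sub₀ _ cbrtSix_pos.ne' (card_le_card hUI), inv_pow,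
          mul_assoc]
    _ ≤ 2 * cbrtSix ^ #I * cbrtSix⁻¹ ^ k := by
        exact mul_le_mul_of_nonneg_left
          (pow_le_pow_of_le_one cbrtSix_inv_pos.le cbrtSix_inv_le_one hkU)
          two_mul_cbrtSix_pow_nonneg

lemma card_le_of_card_image_inter_le (ih : ∀ J ⊂ I, PatternBound J)
    (h : IsPatternFamily I 𝒜 c γ) {U : Finset ι} {k t : ℕ} (hUI : U ⊆ I) (hk : 0 < k)
    (hkU : k ≤ #U) (ht : #(𝒜.image (· ∩ U)) ≤ t) :
    (#𝒜 : ℝ) ≤ 2 * cbrtSix ^ #I * (t * cbrtSix⁻¹ ^ k) := by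
  have hfib : ∀ B ∈ 𝒜.image (· ∩ U),
      (#(𝒜.filter (· ∩ U = B)) : ℝ) ≤ 2 * cbrtSix ^ #I * cbrtSix⁻¹ ^ k := fun B _ =>
    h.card_le_of_inter_eq ih hUI hk hkU (filter_subset _ _) fun A hA => (mem_filter.1 hA).2
  calc (#𝒜 : ℝ) = ∑ B ∈ 𝒜.image (· ∩ U), (#(𝒜.filter (· ∩ U = B)) : ℝ) := by
        exact_mod_cast card_eq_sum_card_image (· ∩ U) 𝒜
    _ ≤ #(𝒜.image (· ∩ U)) * (2 * cbrtSix ^ #I * cbrtSix⁻¹ ^ k) := by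
        simpa using sum_le_sum hfib
    _ ≤ t * (2 * cbrtSix ^ #I * cbrtSix⁻¹ ^ k) := by
        gcongr
        exact mul_nonneg two_mul_cbrtSix_pow_nonneg (pow_nonneg cbrtSix_inv_pos.le k)
    _ = 2 * cbrtSix ^ #I * (t * cbrtSix⁻¹ ^ k) := by ring

lemma card_le_of_minimal_of_two_le_card (ih : ∀ J ⊂ I, PatternBound J)
    (h : IsPatternFamily I 𝒜 c γ) {w : Finset ι} (hw : w ∈ 𝒜) (hw2 : 2 ≤ #w)
    (hmin : ∀ C ∈ 𝒜, C ⊆ w → C = ∅ ∨ C = w) :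
    (#𝒜 : ℝ) ≤ 2 * cbrtSix ^ #I := by
  have htraces : #(𝒜.image (· ∩ w)) ≤ 2 := by
    refine (card_le_card fun B hB => ?_).trans (card_le_two (a := ∅) (b := w))
    obtain ⟨A, hA, rfl⟩ := mem_image.1 hB
    rcases hmin _ (h.inter_mem A hA w hw) inter_subset_right with h0 | h1 <;> simp [*]
  refine (h.card_le_of_card_image_inter_le ih (h.subset_of_mem w hw) two_pos hw2 htraces).trans
    (mul_le_of_le_one_right two_mul_cbrtSix_pow_nonneg ?_)
  push_cast
  nlinarith [three_mul_cbrtSix_inv_sq_le_one, cbrtSix_inv_pos]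

lemma card_le_of_forall_nonempty_mem (ih : ∀ J ⊂ I, PatternBound J)
    (h : IsPatternFamily I 𝒜 c γ) {i : ι} (hi : i ∈ I) (hatom : ∀ A ∈ 𝒜, A.Nonempty → i ∈ A) :
    (#𝒜 : ℝ) ≤ 2 * cbrtSix ^ #I := by
  have hin := h.card_le_of_inter_eq ih (singleton_subset_iff.2 hi) one_pos (by simp)
    (filter_subset (i ∈ ·) 𝒜) fun A hA => inter_singleton_of_mem (mem_filter.1 hA).2
  have hout : #(𝒜.filter (i ∉ ·)) ≤ 1 := card_le_one.2 fun A hA B hB => by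
    simp only [mem_filter] at hA hB
    rw [not_nonempty_iff_eq_empty.1 (mt (hatom A hA.1) hA.2),
      not_nonempty_iff_eq_empty.1 (mt (hatom B hB.1) hB.2)]
  calc (#𝒜 : ℝ) = #(𝒜.filter (i ∈ ·)) + #(𝒜.filter (i ∉ ·)) := by
        exact_mod_cast (card_filter_add_card_filter_not _).symm
    _ ≤ 2 * cbrtSix ^ #I * cbrtSix⁻¹ ^ 1 + 1 := add_le_add hin (by exact_mod_cast hout)
    _ ≤ 2 * cbrtSix ^ #I := by
        simpa [add_comm] using one_add_two_mul_cbrtSix_pow_mul_inv_le (card_ne_zero_of_mem hi)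

lemma card_le_of_not_both_mem (ih : ∀ J ⊂ I, PatternBound J)
    (h : IsPatternFamily I 𝒜 c γ) {i j : ι} (hi : i ∈ I) (hj : j ∈ I) (hij : i ≠ j)
    (hno : ∀ A ∈ 𝒜, ¬(i ∈ A ∧ j ∈ A)) :
    (#𝒜 : ℝ) ≤ 2 * cbrtSix ^ #I := by
  have htraces : #(𝒜.image (· ∩ {i, j})) ≤ 3 := by
    calc #(𝒜.image (· ∩ {i, j})) ≤ #(({i, j} : Finset ι).powerset.erase {i, j}) := by
          refine card_le_card fun B hB => ?_
          obtain ⟨A, hA, rfl⟩ := mem_image.1 hB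
          refine mem_erase.2 ⟨fun hAij => hno A hA ?_, mem_powerset.2 inter_subset_right⟩
          have hiA := hAij ▸ mem_insert_self i {j}
          have hjA := hAij ▸ mem_insert_of_mem (mem_singleton_self j)
          exact ⟨(mem_inter.1 hiA).1, (mem_inter.1 hjA).1⟩
      _ = 3 := by rw [card_erase_of_mem (mem_powerset_self _), card_powerset, card_pair hij]; rfl
  refine (h.card_le_of_card_image_inter_le ih (insert_subset hi (singleton_subset_iff.2 hj))
    two_pos (card_pair hij).ge htraces).trans
    (mul_le_of_le_one_right two_mul_cbrtSix_pow_nonneg ?_)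
  push_cast
  exact three_mul_cbrtSix_inv_sq_le_one

lemma card_le_of_card_eq_three (ih : ∀ J ⊂ I, PatternBound J)
    (h : IsPatternFamily I 𝒜 c γ) {U P Q : Finset ι} (hU : U ∈ 𝒜) (hU3 : #U = 3)
    (hPU : P ⊆ U) (hQU : Q ⊆ U) (hPQ : P ≠ Q) (hP : P ∉ 𝒜) (hQ : Q ∉ 𝒜) :
    (#𝒜 : ℝ) ≤ 2 * cbrtSix ^ #I := by
  have htraces : #(𝒜.image (· ∩ U)) ≤ 6 := by
    calc #(𝒜.image (· ∩ U)) ≤ #((U.powerset.erase P).erase Q) := by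
          refine card_le_card fun B hB => ?_
          obtain ⟨A, hA, rfl⟩ := mem_image.1 hB
          have hAU := h.inter_mem A hA U hU
          exact mem_erase.2 ⟨ne_of_mem_of_not_mem hAU hQ,
            mem_erase.2 ⟨ne_of_mem_of_not_mem hAU hP, mem_powerset.2 inter_subset_right⟩⟩
      _ = 6 := by
          rw [card_erase_of_mem (mem_erase.2 ⟨hPQ.symm, mem_powerset.2 hQU⟩),
            card_erase_of_mem (mem_powerset.2 hPU), card_powerset, hU3]; rfl
  refine (h.card_le_of_card_image_inter_le ih (h.subset_of_mem U hU) three_pos hU3.ge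
    htraces).trans (mul_le_of_le_one_right two_mul_cbrtSix_pow_nonneg ?_)
  rw [cbrtSix_inv_pow_three]
  norm_num

lemma card_le_of_four_le_card (ih : ∀ J ⊂ I, PatternBound J)
    (h : IsPatternFamily I 𝒜 c γ) {i j : ι} {U : Finset ι} (hi : i ∈ I) (hj : j ∈ I)
    (hij : i ≠ j) (hUI : U ⊆ I) (hU4 : 4 ≤ #U) (hmin : ∀ A ∈ 𝒜, i ∈ A → j ∈ A → U ⊆ A) :
    (#𝒜 : ℝ) ≤ 2 * cbrtSix ^ #I := by
  set 𝒜ᵢ := 𝒜.filter (i ∈ ·)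
  have hwithout := h.card_le_of_inter_eq ih (singleton_subset_iff.2 hi) one_pos (by simp)
    (filter_subset (i ∉ ·) 𝒜) fun A hA => inter_singleton_of_notMem (mem_filter.1 hA).2
  have honly := h.card_le_of_inter_eq ih (insert_subset hi (singleton_subset_iff.2 hj)) two_pos
    (card_pair hij).ge ((filter_subset (j ∉ ·) 𝒜ᵢ).trans (filter_subset _ _)) (B := {i})
    fun A hA => by
      simp only [𝒜ᵢ, mem_filter] at hA
      ext l; simp only [mem_inter, mem_insert, mem_singleton]
      constructor
      · rintro ⟨hl, rfl | rfl⟩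
        exacts [rfl, absurd hl hA.2]
      · rintro rfl; exact ⟨hA.1.2, .inl rfl⟩
  have hboth := h.card_le_of_inter_eq ih hUI (by norm_num) hU4
    ((filter_subset (j ∈ ·) 𝒜ᵢ).trans (filter_subset _ _)) (B := U)
    fun A hA => by
      simp only [𝒜ᵢ, mem_filter] at hA
      exact inter_eq_right.2 (hmin A hA.1.1 hA.1.2 hA.2)
  calc (#𝒜 : ℝ) = #(𝒜ᵢ.filter (j ∉ ·)) + #(𝒜ᵢ.filter (j ∈ ·)) + #(𝒜.filter (i ∉ ·)) := by
        rw [add_comm (#(𝒜ᵢ.filter (j ∉ ·)) : ℝ)]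
        exact_mod_cast (by rw [card_filter_add_card_filter_not, card_filter_add_card_filter_not] :
          #(𝒜ᵢ.filter (j ∈ ·)) + #(𝒜ᵢ.filter (j ∉ ·)) + #(𝒜.filter (i ∉ ·)) = #𝒜).symm
    _ ≤ 2 * cbrtSix ^ #I * cbrtSix⁻¹ ^ 2 + 2 * cbrtSix ^ #I * cbrtSix⁻¹ ^ 4
        + 2 * cbrtSix ^ #I * cbrtSix⁻¹ ^ 1 := by gcongr
    _ = 2 * cbrtSix ^ #I * (cbrtSix⁻¹ + cbrtSix⁻¹ ^ 2 + cbrtSix⁻¹ ^ 4) := by ring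
    _ ≤ 2 * cbrtSix ^ #I := mul_le_of_le_one_right two_mul_cbrtSix_pow_nonneg
        cbrtSix_inv_add_sq_add_pow_four_le_one

lemma card_le_of_two_singletons_mem (ih : ∀ J ⊂ I, PatternBound J)
    (h : IsPatternFamily I 𝒜 c 0) {i j : ι} (hi : {i} ∈ 𝒜) (hj : {j} ∈ 𝒜) (hij : i ≠ j) :
    (#𝒜 : ℝ) ≤ 2 * cbrtSix ^ #I := by
  have hiI : i ∈ I := h.subset_of_mem _ hi (mem_singleton_self i)
  have hjI : j ∈ I := h.subset_of_mem _ hj (mem_singleton_self j)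
  by_cases hco : ∃ A ∈ 𝒜, i ∈ A ∧ j ∈ A
  swap
  · exact h.card_le_of_not_both_mem ih hiI hjI hij fun A hA hA' => hco ⟨A, hA, hA'⟩
  set 𝒮 := 𝒜.filter fun A => i ∈ A ∧ j ∈ A
  have h𝒮 : 𝒮.Nonempty := by
    obtain ⟨A, hA, hijA⟩ := hco
    exact ⟨A, mem_filter.2 ⟨hA, hijA⟩⟩
  set U := 𝒮.inf' h𝒮 id
  have hU : U ∈ 𝒜 :=
    inf'_mem (𝒜 : Set (Finset ι)) h.inter_mem _ _ _ fun A hA => (mem_filter.1 hA).1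
  have hmin : ∀ A ∈ 𝒜, i ∈ A → j ∈ A → U ⊆ A := fun A hA hiA hjA =>
    inf'_le id (mem_filter.2 ⟨hA, hiA, hjA⟩)
  have hPU : {i, j} ⊆ U := le_inf' _ _ fun A hA => by
    simpa [insert_subset_iff] using (mem_filter.1 hA).2
  -- atoms have weight 1, so neither `{i, j}` (weight 2) nor `U \ {i, j}` (weight `∑ U - 2`)
  -- has weight in `{0, 1}`
  have hsumP : ∑ l ∈ {i, j}, c l = 2 := by
    rw [sum_pair hij, h.weight_eq_one_of_singleton_mem hi, h.weight_eq_one_of_singleton_mem hj]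
    norm_num
  have hP : {i, j} ∉ 𝒜 := fun hP => by
    rcases h.sum_mem _ hP with hs | hs <;> linarith
  have hQ : U \ {i, j} ∉ 𝒜 := fun hQ => by
    have hsplit := sum_sdiff hPU (f := c)
    rcases h.sum_mem _ hQ with hs | hs <;> rcases h.sum_mem _ hU with hs' | hs' <;> linarith
  have hU3 : 3 ≤ #U := by
    have := card_lt_card (ssubset_of_subset_of_ne hPU (ne_of_mem_of_not_mem hU hP).symm)
    rwa [card_pair hij] at this
  rcases hU3.eq_or_lt with hU3 | hU4
  · refine h.card_le_of_card_eq_three ih hU hU3.symm hPU sdiff_subset (fun hPQ => ?_) hP hQ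
    have hiQ : i ∈ U \ {i, j} := hPQ ▸ mem_insert_self i {j}
    exact (mem_sdiff.1 hiQ).2 (mem_insert_self i {j})
  · exact h.card_le_of_four_le_card ih hiI hjI hij (h.subset_of_mem U hU) hU4 hmin

lemma card_le_of_zero (ih : ∀ J ⊂ I, PatternBound J) (h : IsPatternFamily I 𝒜 c 0) :
    (#𝒜 : ℝ) ≤ 2 * cbrtSix ^ #I := by
  by_cases hatom : ∀ A ∈ 𝒜, A.Nonempty → ∃ i ∈ A, {i} ∈ 𝒜
  swap
  · push Not at hatom
    obtain ⟨A, hA, hAne, hnone⟩ := hatom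
    obtain ⟨w, hw, hwne, hwA, hmin⟩ := exists_minimal_nonempty_subset hA hAne
    refine h.card_le_of_minimal_of_two_le_card ih hw ?_ hmin
    by_contra hlt
    have hw1 : #w = 1 := by have := card_pos.2 hwne; omega
    obtain ⟨l, rfl⟩ := card_eq_one.1 hw1
    exact hnone l (hwA (mem_singleton_self l)) hw
  by_cases hempty : ∀ A ∈ 𝒜, A = ∅
  · have hle : #𝒜 ≤ 1 := card_le_one.2 fun A hA B hB => (hempty A hA).trans (hempty B hB).symm
    have hβ : 1 ≤ cbrtSix ^ #I := one_le_pow₀ (by linarith [three_halves_le_cbrtSix])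
    calc (#𝒜 : ℝ) ≤ 1 := by exact_mod_cast hle
      _ ≤ 2 * cbrtSix ^ #I := by linarith
  push Not at hempty
  obtain ⟨A, hA, hAne⟩ := hempty
  obtain ⟨i, -, hi⟩ := hatom A hA hAne
  by_cases hj : ∃ j ≠ i, {j} ∈ 𝒜
  · obtain ⟨j, hji, hj⟩ := hj
    exact h.card_le_of_two_singletons_mem ih hi hj hji.symm
  refine h.card_le_of_forall_nonempty_mem ih (h.subset_of_mem _ hi (mem_singleton_self i))
    fun B hB hBne => ?_
  obtain ⟨l, hl, hl'⟩ := hatom B hB hBne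
  by_contra hiB
  exact hj ⟨l, fun hli => hiB (hli ▸ hl), hl'⟩

theorem card_le (h : IsPatternFamily I 𝒜 c γ) : (#𝒜 : ℝ) ≤ 2 * cbrtSix ^ #I := by
  induction I using Finset.strongInduction generalizing 𝒜 c γ with
  | H I ih =>
  replace ih : ∀ J ⊂ I, PatternBound J := fun J hJ _ _ _ => ih J hJ
  rcases 𝒜.eq_empty_or_nonempty with rfl | h𝒜
  · simpa using two_mul_cbrtSix_pow_nonneg
  have hA₀ : 𝒜.inf' h𝒜 id ∈ 𝒜 := inf'_mem (𝒜 : Set (Finset ι)) h.inter_mem _ _ _ fun A hA => hA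
  rcases (𝒜.inf' h𝒜 id).eq_empty_or_nonempty with h₀ | h₀
  · -- `∅ ∈ 𝒜` forces the admissible sums to be `{0, 1}` or `{-1, 0}`; negating `c` swaps them
    have hγ := h.sum_mem _ hA₀
    rw [h₀, sum_empty] at hγ
    rcases hγ with rfl | hγ
    · exact h.card_le_of_zero ih
    · exact (show -γ - 1 = 0 by linarith) ▸ h.neg |>.card_le_of_zero ih
  · calc (#𝒜 : ℝ) ≤ 2 * cbrtSix ^ #I * cbrtSix⁻¹ ^ 1 :=
          h.card_le_of_inter_eq ih (h.subset_of_mem _ hA₀) one_pos (card_pos.2 h₀) subset_rfl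
            fun A hA => inter_eq_right.2 (inf'_le id hA)
      _ ≤ 2 * cbrtSix ^ #I :=
          mul_le_of_le_one_right two_mul_cbrtSix_pow_nonneg (by simpa using cbrtSix_inv_le_one)

end IsPatternFamily

end PatternFamily

lemma card_image_restrict_le_card_image_filter {α β : Type*} [Fintype α] [DecidableEq β]
    (F : Finset β) (p : α → β → Bool) :
    #(univ.image fun x (b : {b // b ∈ F}) => p x b) ≤ #(univ.image fun x => F.filter (p x ·)) := by
  have hfactor : (fun x (b : {b // b ∈ F}) => p x b)
      = (fun A (b : {b // b ∈ F}) => decide (b.1 ∈ A)) ∘ fun x => F.filter (p x ·) := by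
    funext x b
    simp [b.2]
  rw [hfactor, ← image_image]
  exact card_image_le

lemma andR_eq_ite {n : ℕ} (S : Finset (Fin n)) (x : Fin n → Bool) :
    andR S x = if andB S x then 1 else 0 := by
  simp [andR, andB, prod_boole]

lemma andB_and {n : ℕ} (S : Finset (Fin n)) (x y : Fin n → Bool) :
    andB S (fun i => x i && y i) = (andB S x && andB S y) := by
  simp [andB, forall_and]

lemma isPatternFamily_image_filter_andB {n : ℕ} {f : (Fin n → Bool) → Bool}
    {c : Finset (Fin n) → ℝ} {Sf : Finset (Finset (Fin n))} (hmem : ∀ S, S ∈ Sf ↔ c S ≠ 0)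
    (hf : ∀ x, (if f x then (1 : ℝ) else 0) = ∑ S : Finset (Fin n), c S * andR S x) :
    IsPatternFamily Sf (univ.image fun x => Sf.filter (andB · x)) c 0 where
  subset_of_mem := by
    simp only [mem_image]
    rintro _ ⟨x, -, rfl⟩
    exact filter_subset _ _
  weight_ne_zero S hS := (hmem S).1 hS
  inter_mem := by
    simp only [mem_image]
    rintro _ ⟨x, -, rfl⟩ _ ⟨y, -, rfl⟩
    refine ⟨fun i => x i && y i, mem_univ _, ?_⟩
    ext S
    simp only [mem_filter, mem_inter, andB_and, Bool.and_eq_true]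
    tauto
  sum_mem := by
    simp only [mem_image]
    rintro _ ⟨x, -, rfl⟩
    have hsum : ∑ S ∈ Sf.filter (andB · x), c S = if f x then 1 else 0 := by
      rw [hf x, sum_filter]
      refine (sum_subset (subset_univ Sf) fun S _ hS => ?_).trans (sum_congr rfl fun S _ => ?_)
      · simp [not_not.1 ((hmem S).not.1 hS)]
      · rw [andR_eq_ite]
        split_ifs <;> simp
    rw [hsum]
    cases f x <;> simp

/-- For every Boolean function `f`, the Möbius pattern complexity satisfies
`Pat(f) ≤ 2 · 6^{spar(f)/3}`. -/
theorem stmt10 (n : ℕ) (f : (Fin n → Bool) → Bool) (c : Finset (Fin n) → ℝ)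
    (Sf : Finset (Finset (Fin n))) (hmem : ∀ S, S ∈ Sf ↔ c S ≠ 0)
    (hf : ∀ x, (if f x then (1 : ℝ) else 0) = ∑ S : Finset (Fin n), c S * andR S x) :
    (((Finset.univ.image
        (fun x : Fin n → Bool => fun S : {S // S ∈ Sf} => andB S.1 x)).card : ℝ)) ≤
      2 * (6 : ℝ) ^ ((Sf.card : ℝ) / 3) := by
  calc (#(univ.image fun x (S : {S // S ∈ Sf}) => andB S.1 x) : ℝ)
      ≤ #(univ.image fun x => Sf.filter (andB · x)) := by
        exact_mod_cast card_image_restrict_le_card_image_filter Sf fun x S => andB S x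
    _ ≤ 2 * cbrtSix ^ #Sf := (isPatternFamily_image_filter_andB hmem hf).card_le
    _ = 2 * 6 ^ ((#Sf : ℝ) / 3) := by rw [cbrtSix_pow_eq_rpow]
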